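/- arXiv:2001.07896 — 5 statements merged into one kernel-verified Lean document; each statement's English description precedes it below -/
import Mathlib

section
/- Let f : ℝⁿ → ℝᵐ be a surjective linear mapping. If Y ⊆ ℝᵐ is porous, then f⁻¹(Y) is porous in ℝⁿ. -/
open Metric Filter Set

/-- γ(x,R,X): sup of radii r ≥ 0 of open balls contained in B_R(x) \ X (sup ∅ = 0). -/
noncomputable def porGamma {E : Type*} [SeminormedAddCommGroup E] (x : E) (R : ℝ) (X : Set E) : ℝ :=
  sSup {r : ℝ | 0 ≤ r ∧ ∃ x' : E, ball x' r ⊆ ball x R \ X}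

/-- Porosity of X at x: liminf_{R→0⁺} γ(x,R,X)/R. -/
noncomputable def porosityAt {E : Type*} [SeminormedAddCommGroup E] (x : E) (X : Set E) : ℝ :=
  liminf (fun R => porGamma x R X / R) (nhdsWithin 0 (Ioi 0))

/-- X is porous if its porosity is positive at each of its points. -/
def IsPorous {E : Type*} [SeminormedAddCommGroup E] (X : Set E) : Prop :=
  ∀ x ∈ X, 0 < porosityAt x X

/-- X is σ-porous if it is a countable union of porous sets. -/
def IsSigmaPorous {E : Type*} [SeminormedAddCommGroup E] (X : Set E) : Prop :=
  ∃ f : ℕ → Set E, (∀ k, IsPorous (f k)) ∧ X = ⋃ k, f k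

/-- Asymptotic cone of X. -/
def asympCone {E : Type*} [SeminormedAddCommGroup E] [NormedSpace ℝ E] (X : Set E) : Set E :=
  {v | ∃ (x : ℕ → E) (t : ℕ → ℝ), (∀ k, x k ∈ X) ∧ (∀ k, 0 < t k) ∧
    Tendsto (fun k => ‖x k‖) atTop atTop ∧ Tendsto (fun k => t k • x k) atTop (nhds v)}

section Aux

variable {E : Type*} [NormedAddCommGroup E] [NormedSpace ℝ E]

/-- In a nontrivial normed group, any admissible radius is at most `4|R|`. -/
lemma porGamma_mem_le [Nontrivial E] {x : E} {R : ℝ} {X : Set E} {r : ℝ}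
    (hr0 : 0 ≤ r) (x' : E) (hsub : ball x' r ⊆ ball x R \ X) : r ≤ 4 * |R| := by
  rcases hr0.eq_or_lt with h0 | h0
  · rw [← h0]; positivity
  · obtain ⟨z, hz⟩ := exists_ne (0 : E)
    have hzn : 0 < ‖z‖ := norm_pos_iff.2 hz
    set e : E := (r / (2 * ‖z‖)) • z with he
    have hne : ‖e‖ = r / 2 := by
      rw [he, norm_smul, Real.norm_eq_abs, abs_of_pos (by positivity)]
      field_simp
    have h1 : x' ∈ ball x R := (hsub (mem_ball_self h0)).1
    have h2 : x' + e ∈ ball x' r := by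
      rw [mem_ball, dist_eq_norm, add_sub_cancel_left, hne]
      linarith
    have h3 : x' + e ∈ ball x R := (hsub h2).1
    have hd1 : dist x' x < R := mem_ball.1 h1
    have hd3 : dist (x' + e) x < R := mem_ball.1 h3
    have hRpos : 0 < R := lt_of_le_of_lt dist_nonneg hd1
    have htr : dist (x' + e) x' ≤ dist (x' + e) x + dist x x' := dist_triangle _ _ _
    rw [dist_eq_norm, add_sub_cancel_left, hne] at htr
    rw [dist_comm] at hd1
    rw [abs_of_pos hRpos]
    linarith

lemma porGamma_bddAbove [Nontrivial E] (x : E) (R : ℝ) (X : Set E) :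
    BddAbove {r : ℝ | 0 ≤ r ∧ ∃ x' : E, ball x' r ⊆ ball x R \ X} := by
  refine ⟨4 * |R|, fun r hr => ?_⟩
  obtain ⟨hr0, x', hsub⟩ := hr
  exact porGamma_mem_le hr0 x' hsub

lemma porGamma_set_nonempty (x : E) (R : ℝ) (X : Set E) :
    Set.Nonempty {r : ℝ | 0 ≤ r ∧ ∃ x' : E, ball x' r ⊆ ball x R \ X} :=
  ⟨0, le_rfl, x, by rw [ball_zero]; exact empty_subset _⟩

lemma porGamma_le [Nontrivial E] (x : E) (R : ℝ) (X : Set E) :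
    porGamma x R X ≤ 4 * |R| :=
  csSup_le (porGamma_set_nonempty x R X) (fun r hr => by
    obtain ⟨hr0, x', hsub⟩ := hr; exact porGamma_mem_le hr0 x' hsub)

lemma porGamma_nonneg {E : Type*} [SeminormedAddCommGroup E] (x : E) (R : ℝ) (X : Set E) :
    0 ≤ porGamma x R X := by
  apply Real.sSup_nonneg
  rintro r ⟨hr0, -⟩
  exact hr0

lemma le_porGamma [Nontrivial E] {x : E} {R r : ℝ} {X : Set E}
    (hr0 : 0 ≤ r) (x' : E) (hsub : ball x' r ⊆ ball x R \ X) : r ≤ porGamma x R X :=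
  le_csSup (porGamma_bddAbove x R X) ⟨hr0, x', hsub⟩

lemma porosityAt_eq_zero_of_subsingleton {F : Type*} [SeminormedAddCommGroup F] [Subsingleton F]
    {y : F} {Y : Set F} (hy : y ∈ Y) : porosityAt y Y = 0 := by
  have h : ∀ R : ℝ, porGamma y R Y = 0 := by
    intro R
    unfold porGamma
    have hset : {r : ℝ | 0 ≤ r ∧ ∃ x' : F, ball x' r ⊆ ball y R \ Y} = {0} := by
      ext r
      simp only [mem_setOf_eq, mem_singleton_iff]
      constructor
      · rintro ⟨hr0, x', hsub⟩
        by_contra hne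
        have hrpos : 0 < r := hr0.lt_of_ne (Ne.symm hne)
        have hyb : y ∈ ball x' r := by
          rw [mem_ball, Subsingleton.elim y x', dist_self]
          exact hrpos
        exact (hsub hyb).2 hy
      · rintro rfl
        exact ⟨le_rfl, y, by rw [ball_zero]; exact empty_subset _⟩
    rw [hset, csSup_singleton]
  unfold porosityAt
  have heq : (fun R : ℝ => porGamma y R Y / R) = fun _ => (0 : ℝ) := by
    funext R; rw [h, zero_div]
  rw [heq, liminf_const]

end Aux

/-- The preimage of a porous set under a surjective linear map is porous. -/
theorem porous_preimage {n m : ℕ}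
    (f : EuclideanSpace ℝ (Fin n) →ₗ[ℝ] EuclideanSpace ℝ (Fin m))
    (hf : Function.Surjective f) (Y : Set (EuclideanSpace ℝ (Fin m)))
    (hY : IsPorous Y) : IsPorous (f ⁻¹' Y) := by
  intro x hx
  have hfxY : f x ∈ Y := hx
  have hp := hY (f x) hfxY
  rcases subsingleton_or_nontrivial (EuclideanSpace ℝ (Fin m)) with hm | hm
  · rw [porosityAt_eq_zero_of_subsingleton hfxY] at hp
    exact absurd hp (lt_irrefl 0)
  have hn : Nontrivial (EuclideanSpace ℝ (Fin n)) := by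
    obtain ⟨a, b, hab⟩ := exists_pair_ne (EuclideanSpace ℝ (Fin m))
    obtain ⟨u, rfl⟩ := hf a
    obtain ⟨v, rfl⟩ := hf b
    exact ⟨u, v, fun h => hab (by rw [h])⟩
  -- constants
  obtain ⟨K, hK, hfK⟩ : ∃ K : ℝ, 0 < K ∧ ∀ z, ‖f z‖ ≤ K * ‖z‖ := by
    refine ⟨‖LinearMap.toContinuousLinearMap f‖ + 1, by positivity, fun z => ?_⟩
    have h1 := (LinearMap.toContinuousLinearMap f).le_opNorm z
    rw [LinearMap.coe_toContinuousLinearMap'] at h1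
    nlinarith [norm_nonneg z]
  obtain ⟨g, hg⟩ := f.exists_rightInverse_of_surjective (LinearMap.range_eq_top.2 hf)
  have hgf : ∀ w, f (g w) = w := by
    intro w
    have := LinearMap.congr_fun hg w
    simpa using this
  obtain ⟨C, hC, hgC⟩ : ∃ C : ℝ, 0 < C ∧ ∀ w, ‖g w‖ ≤ C * ‖w‖ := by
    refine ⟨‖LinearMap.toContinuousLinearMap g‖ + 1, by positivity, fun w => ?_⟩
    have h1 := (LinearMap.toContinuousLinearMap g).le_opNorm w
    rw [LinearMap.coe_toContinuousLinearMap'] at h1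
    nlinarith [norm_nonneg w]
  obtain ⟨c, hc, hc1, hc2⟩ : ∃ c : ℝ, 0 < c ∧ c * (2 * C) ≤ 1 ∧ 8 * c ≤ K := by
    refine ⟨min (1 / (2 * C)) (K / 8), lt_min (by positivity) (by positivity), ?_, ?_⟩
    · have h := min_le_left (1 / (2 * C)) (K / 8)
      calc min (1 / (2 * C)) (K / 8) * (2 * C) ≤ (1 / (2 * C)) * (2 * C) := by nlinarith
        _ = 1 := by field_simp
    · have h := min_le_right (1 / (2 * C)) (K / 8)
      linarith
  set q := porosityAt (f x) Y with hq
  -- Step A: eventually in S, q/2 < porGamma (f x) S Y / S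
  have hbdd : IsBoundedUnder (· ≥ ·) (nhdsWithin (0:ℝ) (Ioi 0))
      (fun S => porGamma (f x) S Y / S) := by
    refine ⟨0, eventually_map.2 ?_⟩
    filter_upwards [self_mem_nhdsWithin] with S hS
    have hS0 : (0:ℝ) < S := hS
    exact div_nonneg (porGamma_nonneg _ _ _) hS0.le
  have hA : ∀ᶠ S in nhdsWithin (0:ℝ) (Ioi 0), q / 2 < porGamma (f x) S Y / S := by
    apply eventually_lt_of_lt_liminf _ hbdd
    rw [hq]
    unfold porosityAt
    exact half_lt_self hp
  -- Step B: transfer along R ↦ c * R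
  have hT : Tendsto (fun R : ℝ => c * R) (nhdsWithin 0 (Ioi 0)) (nhdsWithin 0 (Ioi 0)) := by
    apply tendsto_nhdsWithin_of_tendsto_nhds_of_eventually_within
    · have h1 : Tendsto (fun R : ℝ => c * R) (nhds 0) (nhds (c * 0)) :=
        (continuous_const.mul continuous_id).tendsto 0
      rw [mul_zero] at h1
      exact h1.mono_left nhdsWithin_le_nhds
    · filter_upwards [self_mem_nhdsWithin] with R hR
      exact mul_pos hc hR
  have hB : ∀ᶠ R in nhdsWithin (0:ℝ) (Ioi 0),
      q / 2 < porGamma (f x) (c * R) Y / (c * R) := hT.eventually hA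
  -- Step C: lower bound for porGamma of the preimage
  have hC' : ∀ᶠ R in nhdsWithin (0:ℝ) (Ioi 0),
      q * c / (8 * K) ≤ porGamma x R (f ⁻¹' Y) / R := by
    filter_upwards [hB, self_mem_nhdsWithin] with R hR hR0'
    have hR0 : (0:ℝ) < R := hR0'
    have hS : 0 < c * R := mul_pos hc hR0
    have hγ : q / 2 * (c * R) < porGamma (f x) (c * R) Y := (lt_div_iff₀ hS).1 hR
    have hqS : 0 < q * (c * R) := mul_pos hp hS
    have hlt : q * (c * R) / 4 < porGamma (f x) (c * R) Y := by nlinarith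
    obtain ⟨r, hrmem, hrgt⟩ :=
      exists_lt_of_lt_csSup (porGamma_set_nonempty (f x) (c * R) Y) hlt
    obtain ⟨hr0, y', hsub⟩ := hrmem
    have hrpos : 0 < r := lt_of_le_of_lt (by positivity) hrgt
    have hy' : y' ∈ ball (f x) (c * R) := (hsub (mem_ball_self hrpos)).1
    have hrS : r ≤ 4 * (c * R) := by
      have := porGamma_mem_le hr0 y' hsub
      rwa [abs_of_pos hS] at this
    have hfx' : f (x + g (y' - f x)) = y' := by
      rw [map_add, hgf]
      abel
    have hx'd : dist (x + g (y' - f x)) x ≤ C * (c * R) := by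
      rw [dist_eq_norm, add_sub_cancel_left]
      have h1 : ‖g (y' - f x)‖ ≤ C * ‖y' - f x‖ := hgC _
      have h2 : ‖y' - f x‖ < c * R := by
        have := mem_ball.1 hy'
        rwa [dist_eq_norm] at this
      nlinarith
    have hρpos : 0 < r / K := div_pos hrpos hK
    -- the ball of radius r/K around x + g (y' - f x) works
    have hsub' : ball (x + g (y' - f x)) (r / K) ⊆ ball x R \ (f ⁻¹' Y) := by
      intro z hz
      have hzx' : dist z (x + g (y' - f x)) < r / K := mem_ball.1 hz
      constructor
      · have htr : dist z x ≤ dist z (x + g (y' - f x)) + dist (x + g (y' - f x)) x :=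
          dist_triangle _ _ _
        have hρle : r / K ≤ 4 * (c * R) / K := by gcongr
        have h1 : 4 * (c * R) / K ≤ R / 2 := by
          rw [div_le_div_iff₀ hK two_pos]
          nlinarith
        have h2 : C * (c * R) ≤ R / 2 := by nlinarith
        rw [mem_ball]
        linarith
      · intro hzY
        have hfz : f z ∈ ball y' r := by
          rw [mem_ball, dist_eq_norm, ← hfx', ← map_sub]
          calc ‖f (z - (x + g (y' - f x)))‖ ≤ K * ‖z - (x + g (y' - f x))‖ := hfK _
            _ < K * (r / K) := by
              apply mul_lt_mul_of_pos_left _ hK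
              rwa [← dist_eq_norm]
            _ = r := by field_simp
        exact (hsub hfz).2 hzY
    have hle : r / K ≤ porGamma x R (f ⁻¹' Y) := le_porGamma hρpos.le _ hsub'
    have hρgt : q * c * R / 8 / K ≤ r / K := by
      gcongr
      nlinarith
    rw [le_div_iff₀ hR0]
    calc q * c / (8 * K) * R = q * c * R / 8 / K := by ring
      _ ≤ r / K := hρgt
      _ ≤ porGamma x R (f ⁻¹' Y) := hle
  -- conclude
  have hcb : IsCoboundedUnder (· ≥ ·) (nhdsWithin (0:ℝ) (Ioi 0))
      (fun R => porGamma x R (f ⁻¹' Y) / R) := by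
    refine isCoboundedUnder_ge_of_eventually_le (x := (4:ℝ)) _ ?_
    filter_upwards [self_mem_nhdsWithin] with R hR
    have hR0 : (0:ℝ) < R := hR
    have := porGamma_le x R (f ⁻¹' Y)
    rw [abs_of_pos hR0] at this
    rw [div_le_iff₀ hR0]
    linarith
  have hfin : q * c / (8 * K) ≤ porosityAt x (f ⁻¹' Y) := by
    unfold porosityAt
    exact le_liminf_of_le hcb hC'
  have hpos : 0 < q * c / (8 * K) := by positivity
  linarith
end

section
/- Let Y ⊆ ℝⁿ be a linear subspace. Then the set of linear maps T : ℝⁿ → ℝᵐ such that the restriction T|_Y does not have maximal rank (i.e., rank(T|_Y) < min(m, dim Y)) is porous in the space L(ℝⁿ, ℝᵐ) of linear maps equipped with the operator norm. -/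
open Metric Filter Set

/-!
Write `A = T|_Y`. When `dim Y ≤ m`, a polar decomposition of `A` gives a linear isometry `U`
with `⟪A x, U x⟫ ≥ 0`, hence `‖(A + ε U) x‖ ≥ ε ‖x‖`, so every map within `ε` of `A + ε U` is
injective; when `dim Y > m` the same argument applied to `A†` yields maps that are all surjective.
Extending `U` by the orthogonal projection onto `Y`, every `T` lies within `ε` of a map `T'` whose
`ε`-ball consists of maps of maximal rank on `Y`. Taking `ε = R / 2`, the ball `B_R(T)` contains a
ball of radius `R / 2` missing the set, so its porosity at `T` is at least `1 / 2`.
-/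

open Module Topology
open scoped RealInnerProductSpace

section LinearAlgebra

variable {E F : Type*} [NormedAddCommGroup E] [InnerProductSpace ℝ E]
  [NormedAddCommGroup F] [InnerProductSpace ℝ F]

theorem exists_orthonormal_eq_norm_smul [FiniteDimensional ℝ F] {ι : Type*} [Fintype ι]
    {w : ι → F} (hw : Pairwise fun i j => ⟪w i, w j⟫ = 0)
    (hcard : Fintype.card ι ≤ finrank ℝ F) :
    ∃ u : ι → F, Orthonormal ℝ u ∧ ∀ i, w i = ‖w i‖ • u i := by
  -- normalize the nonzero `w i`, and pad the index type to `finrank ℝ F` elements so that the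
  -- orthonormal family they form extends to an orthonormal basis indexed by it
  let v : ι ⊕ Fin (finrank ℝ F - Fintype.card ι) → F := Sum.elim (fun i => ‖w i‖⁻¹ • w i) 0
  have hv : Orthonormal ℝ (Set.domRestrict {k | v k ≠ 0} v) := by
    refine ⟨?_, ?_⟩
    · rintro ⟨(i | _), hk⟩
      · exact norm_smul_inv_norm (by simpa [v] using hk)
      · simp [v] at hk
    · rintro ⟨(i | _), hk⟩ ⟨(j | _), hl⟩ hne
      · have hij : i ≠ j := by rintro rfl; exact hne rfl
        simp [v, real_inner_smul_left, real_inner_smul_right, hw hij]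
      all_goals simp_all [v]
  obtain ⟨b, hb⟩ := hv.exists_orthonormalBasis_extension_of_card_eq (by simp; omega)
  refine ⟨b ∘ Sum.inl, b.orthonormal.comp _ Sum.inl_injective, fun i => ?_⟩
  by_cases hi : w i = 0
  · simp [hi]
  · rw [Function.comp_apply, hb (Sum.inl i) (by simpa [v] using hi)]
    simp [v, smul_smul, hi]

theorem LinearMap.exists_orthonormalBasis_apply_eq_smul_orthonormal [FiniteDimensional ℝ E]
    [FiniteDimensional ℝ F] (hdim : finrank ℝ E ≤ finrank ℝ F) (A : E →ₗ[ℝ] F) :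
    ∃ (b : OrthonormalBasis (Fin (finrank ℝ E)) ℝ E) (u : Fin (finrank ℝ E) → F)
      (σ : Fin (finrank ℝ E) → ℝ), Orthonormal ℝ u ∧ (∀ i, 0 ≤ σ i) ∧ ∀ i, A (b i) = σ i • u i := by
  let hA := A.isSymmetric_adjoint_comp_self
  let b := hA.eigenvectorBasis rfl
  have horth : Pairwise fun i j => ⟪A (b i), A (b j)⟫ = 0 := fun i j hij => by
    dsimp only
    rw [← LinearMap.adjoint_inner_left, ← LinearMap.comp_apply, hA.apply_eigenvectorBasis,
      real_inner_smul_left, b.orthonormal.inner_eq_zero hij, mul_zero]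
  obtain ⟨u, hu, hAu⟩ := exists_orthonormal_eq_norm_smul horth (by simpa using hdim)
  exact ⟨b, u, _, hu, fun _ => norm_nonneg _, hAu⟩

theorem LinearMap.exists_linearIsometry_inner_apply_nonneg [FiniteDimensional ℝ E]
    [FiniteDimensional ℝ F] (hdim : finrank ℝ E ≤ finrank ℝ F) (A : E →ₗ[ℝ] F) :
    ∃ U : E →ₗᵢ[ℝ] F, ∀ x, 0 ≤ ⟪A x, U x⟫ := by
  obtain ⟨b, u, σ, hu, hσ, hAu⟩ := A.exists_orthonormalBasis_apply_eq_smul_orthonormal hdim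
  have hUb : ∀ i, b.toBasis.constr ℝ u (b i) = u i := fun i => by
    simpa only [OrthonormalBasis.coe_toBasis] using b.toBasis.constr_basis ℝ u i
  let U := (b.toBasis.constr ℝ u).isometryOfOrthonormal (v := b.toBasis)
    (by rw [OrthonormalBasis.coe_toBasis]; exact b.orthonormal)
    (by rw [OrthonormalBasis.coe_toBasis, show _ ∘ ⇑b = u from funext hUb]; exact hu)
  refine ⟨U, fun x => ?_⟩
  have hAx : A x = ∑ i, (b.repr x i * σ i) • u i := by
    conv_lhs => rw [← b.sum_repr x]
    simp only [map_sum, map_smul, hAu, smul_smul]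
  have hUx : U x = ∑ i, b.repr x i • u i := by
    conv_lhs => rw [← b.sum_repr x]
    simp only [map_sum, map_smul, U, LinearMap.coe_isometryOfOrthonormal, hUb]
  rw [hAx, hUx, hu.inner_sum]
  exact Finset.sum_nonneg fun i _ => by
    simpa [mul_right_comm] using mul_nonneg (mul_self_nonneg (b.repr x i)) (hσ i)

theorem mul_norm_le_norm_add_smul_of_inner_nonneg {a b : F} (hab : 0 ≤ ⟪a, b⟫) {ε : ℝ}
    (hε : 0 ≤ ε) : ε * ‖b‖ ≤ ‖a + ε • b‖ := by
  rw [← sq_le_sq₀ (by positivity) (norm_nonneg _), norm_add_sq_real, inner_smul_right,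
    norm_smul, Real.norm_of_nonneg hε]
  nlinarith [sq_nonneg ‖a‖]

theorem ContinuousLinearMap.injective_of_norm_sub_lt {𝕜 G H : Type*} [NontriviallyNormedField 𝕜]
    [NormedAddCommGroup G] [NormedSpace 𝕜 G] [SeminormedAddCommGroup H] [NormedSpace 𝕜 H]
    {D S : G →L[𝕜] H} {δ : ℝ} (hD : ∀ x, δ * ‖x‖ ≤ ‖D x‖) (hS : ‖S - D‖ < δ) :
    Function.Injective S := by
  refine (injective_iff_map_eq_zero S).mpr fun x hx => norm_eq_zero.mp ?_
  have : δ * ‖x‖ ≤ ‖S - D‖ * ‖x‖ := calc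
    δ * ‖x‖ ≤ ‖D x‖ := hD x
    _ = ‖(S - D) x‖ := by simp [hx]
    _ ≤ ‖S - D‖ * ‖x‖ := (S - D).le_opNorm x
  nlinarith [norm_nonneg x]

variable [FiniteDimensional ℝ E] [FiniteDimensional ℝ F]

theorem ContinuousLinearMap.surjective_of_injective_adjoint {S : E →L[ℝ] F}
    (hS : Function.Injective (adjoint S)) : Function.Surjective S := by
  rw [← coe_coe, ← LinearMap.range_eq_top, ← Submodule.orthogonal_eq_bot_iff, orthogonal_range,
    LinearMap.ker_eq_bot]
  exact hS

theorem ContinuousLinearMap.exists_ball_subset_injective (hdim : finrank ℝ E ≤ finrank ℝ F)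
    (A : E →L[ℝ] F) {ε : ℝ} (hε : 0 ≤ ε) :
    ∃ B : E →L[ℝ] F, ‖B‖ ≤ 1 ∧ ∀ S : E →L[ℝ] F, ‖S - (A + ε • B)‖ < ε → Function.Injective S := by
  obtain ⟨U, hU⟩ := (A : E →ₗ[ℝ] F).exists_linearIsometry_inner_apply_nonneg hdim
  refine ⟨U.toContinuousLinearMap, U.norm_toContinuousLinearMap_le, fun S hS => ?_⟩
  refine injective_of_norm_sub_lt (fun x => ?_) hS
  simpa using mul_norm_le_norm_add_smul_of_inner_nonneg (hU x) hε

theorem ContinuousLinearMap.exists_ball_subset_injective_or_surjective (A : E →L[ℝ] F) {ε : ℝ}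
    (hε : 0 ≤ ε) : ∃ B : E →L[ℝ] F, ‖B‖ ≤ 1 ∧
      ∀ S : E →L[ℝ] F, ‖S - (A + ε • B)‖ < ε → Function.Injective S ∨ Function.Surjective S := by
  rcases le_total (finrank ℝ E) (finrank ℝ F) with hdim | hdim
  · obtain ⟨B, hB, hinj⟩ := A.exists_ball_subset_injective hdim hε
    exact ⟨B, hB, fun S hS => .inl (hinj S hS)⟩
  · obtain ⟨C, hC, hinj⟩ := (adjoint A).exists_ball_subset_injective hdim hε
    refine ⟨adjoint C, by rwa [LinearIsometryEquiv.norm_map], fun S hS => .inr ?_⟩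
    refine surjective_of_injective_adjoint (hinj _ ?_)
    have hadj : adjoint S - (adjoint A + ε • C) = adjoint (S - (A + ε • adjoint C)) := by simp
    rwa [hadj, LinearIsometryEquiv.norm_map]

theorem LinearMap.finrank_range_eq_min_of_injective_or_surjective {K V W : Type*} [DivisionRing K]
    [AddCommGroup V] [Module K V] [FiniteDimensional K V] [AddCommGroup W] [Module K W]
    [FiniteDimensional K W] {f : V →ₗ[K] W} (hf : Function.Injective f ∨ Function.Surjective f) :
    finrank K (range f) = min (finrank K V) (finrank K W) := by
  rcases hf with hf | hf
  · rw [finrank_range_of_inj hf, min_eq_left (finrank_le_finrank_of_injective hf)]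
  · have hWV := f.finrank_range_le
    rw [range_eq_top.mpr hf, finrank_top] at hWV ⊢
    rw [min_eq_right hWV]

theorem ContinuousLinearMap.exists_ball_subset_finrank_map_eq_min (Y : Submodule ℝ E)
    (T : E →L[ℝ] F) {ε : ℝ} (hε : 0 ≤ ε) : ∃ T' : E →L[ℝ] F, ‖T' - T‖ ≤ ε ∧
      ∀ S : E →L[ℝ] F, ‖S - T'‖ < ε →
        finrank ℝ (Y.map (S : E →ₗ[ℝ] F)) = min (finrank ℝ F) (finrank ℝ Y) := by
  obtain ⟨B, hB, hS⟩ := (T ∘L Y.subtypeL).exists_ball_subset_injective_or_surjective hε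
  let P := Y.orthogonalProjectionOnto
  refine ⟨T + ε • (B ∘L P), ?_, fun S hS' => ?_⟩
  · calc ‖T + ε • (B ∘L P) - T‖ = ε * ‖B ∘L P‖ := by simp [norm_smul, abs_of_nonneg hε]
      _ ≤ ε * (‖B‖ * ‖P‖) := by gcongr; exact opNorm_comp_le B P
      _ ≤ ε * (1 * 1) := by gcongr; exact Y.orthogonalProjectionOnto_norm_le
      _ = ε := by ring
  have hrestrict : S ∘L Y.subtypeL - (T ∘L Y.subtypeL + ε • B) =
      (S - (T + ε • (B ∘L P))) ∘L Y.subtypeL := by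
    ext y; simp [P]
  have hY := hS (S ∘L Y.subtypeL) <| by
    rw [hrestrict]
    exact (opNorm_comp_le _ _).trans_lt <|
      (mul_le_of_le_one_right (norm_nonneg _) Y.norm_subtypeL_le).trans_lt hS'
  rw [← LinearMap.range_domRestrict, min_comm]
  exact LinearMap.finrank_range_eq_min_of_injective_or_surjective hY

end LinearAlgebra

section Porosity

variable {E : Type*} [NormedAddCommGroup E] [NormedSpace ℝ E]

theorem radius_le_of_ball_subset_ball [Nontrivial E] {x y : E} {r R : ℝ} (hr : 0 ≤ r)
    (hR : 0 ≤ R) (h : ball y r ⊆ ball x R) : r ≤ R := by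
  have := diam_mono h isBounded_ball
  rw [diam_ball_eq y hr, diam_ball_eq x hR] at this
  linarith

theorem le_porosityAt {x : E} {X : Set E} {c : ℝ} (hx : x ∈ X) (hc : 0 < c)
    (h : ∀ R > 0, ∃ y, ball y (c * R) ⊆ ball x R \ X) : c ≤ porosityAt x X := by
  have : Nontrivial E := by
    obtain ⟨y, hy⟩ := h 1 one_pos
    exact ⟨⟨y, x, fun hyx => (hy (mem_ball_self (by simpa using hc))).2 (hyx ▸ hx)⟩⟩
  have hγ : ∀ R > 0, c * R ≤ porGamma x R X ∧ porGamma x R X ≤ R := fun R hR => by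
    have hbdd : ∀ r ∈ {r : ℝ | 0 ≤ r ∧ ∃ y, ball y r ⊆ ball x R \ X}, r ≤ R :=
      fun r ⟨hr, y, hy⟩ => radius_le_of_ball_subset_ball hr hR.le (hy.trans sdiff_subset)
    have hcR : c * R ∈ {r : ℝ | 0 ≤ r ∧ ∃ y, ball y r ⊆ ball x R \ X} := ⟨by positivity, h R hR⟩
    exact ⟨le_csSup ⟨R, hbdd⟩ hcR, csSup_le ⟨_, hcR⟩ hbdd⟩
  have hev : ∀ᶠ R in 𝓝[>] (0 : ℝ), c ≤ porGamma x R X / R ∧ porGamma x R X / R ≤ 1 := by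
    filter_upwards [self_mem_nhdsWithin] with R (hR : 0 < R)
    rw [le_div_iff₀ hR, div_le_one hR]
    exact hγ R hR
  exact le_liminf_of_le (isCoboundedUnder_ge_of_eventually_le _ (hev.mono fun _ => And.right))
    (hev.mono fun _ => And.left)

end Porosity

/-- The set of continuous linear maps T : ℝⁿ → ℝᵐ whose restriction to a fixed subspace Y does
not have maximal rank is porous in L(ℝⁿ, ℝᵐ) (operator norm). -/
theorem nonMaximalRank_restriction_porous {n m : ℕ} (Y : Submodule ℝ (EuclideanSpace ℝ (Fin n))) :
    IsPorous {T : EuclideanSpace ℝ (Fin n) →L[ℝ] EuclideanSpace ℝ (Fin m) |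
      Module.finrank ℝ (Y.map (T : EuclideanSpace ℝ (Fin n) →ₗ[ℝ] EuclideanSpace ℝ (Fin m))) <
        min m (Module.finrank ℝ Y)} := by
  intro T hT
  refine one_half_pos.trans_le (le_porosityAt hT one_half_pos fun R hR => ?_)
  obtain ⟨T', hT'T, hT'⟩ := T.exists_ball_subset_finrank_map_eq_min Y (ε := 1 / 2 * R)
    (by positivity)
  refine ⟨T', fun S hS => ⟨?_, fun hSX => ?_⟩⟩
  · rw [mem_ball, dist_eq_norm] at hS ⊢
    calc ‖S - T‖ ≤ ‖S - T'‖ + ‖T' - T‖ := norm_sub_le_norm_sub_add_norm_sub S T' T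
      _ < R := by linarith
  · rw [mem_ball, dist_eq_norm] at hS
    have hSmax := hT' S hS
    rw [finrank_euclideanSpace_fin] at hSmax
    exact ne_of_lt hSX hSmax
end

section
/- Let X ⊆ ℝⁿ be a closed set (not necessarily convex) and T : ℝⁿ → ℝᵐ a linear map with C_∞X ∩ ker(T) = {0}. Then there exists an open neighborhood N of T in L(ℝⁿ, ℝᵐ) (with the operator norm) such that for every S ∈ N one has C_∞X ∩ ker(S) = {0} and S(X) is closed in ℝᵐ. -/
/-!
Because `C_∞X ∩ ker T = {0}`, compactness of the unit sphere yields `c > 0` and `R` with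
`c‖x‖ ≤ ‖T x‖` for all `x ∈ X` with `‖x‖ ≥ R`. This linear growth bound persists, with `c / 2`,
for every `S` with `‖S - T‖ < c / 2`, and it gives both conclusions for such `S`: an asymptotic
direction `v` of `X` satisfies `c‖v‖ ≤ ‖S v‖`, and the points of `X` that `S` maps into a ball
form a bounded, hence compact, set, so `S '' X` is closed.
-/

open Metric Filter Set

open Topology

section GrowthBound

variable {E F : Type*} [NormedAddCommGroup E] [NormedSpace ℝ E]
  [NormedAddCommGroup F] [NormedSpace ℝ F]

theorem inter_ker_eq_zero_iff (C : Set E) (T : E →L[ℝ] F) :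
    C ∩ (LinearMap.ker (T : E →ₗ[ℝ] F) : Set E) = {0} ↔ 0 ∈ C ∧ ∀ v ∈ C, T v = 0 → v = 0 := by
  refine ⟨fun h => ⟨(h.symm.subset rfl).1, fun v hv hTv => h.subset ⟨hv, hTv⟩⟩, ?_⟩
  rintro ⟨h0, hC⟩
  exact Set.eq_singleton_iff_unique_mem.2 ⟨⟨h0, by simp⟩, fun v hv => hC v hv.1 hv.2⟩

theorem exists_mem_asympCone_of_tendsto_norm [ProperSpace E] {X : Set E} {x : ℕ → E}
    (hxX : ∀ k, x k ∈ X) (hx0 : ∀ k, x k ≠ 0) (hx : Tendsto (fun k => ‖x k‖) atTop atTop) :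
    ∃ v ∈ asympCone X, ‖v‖ = 1 ∧ ∃ φ : ℕ → ℕ, StrictMono φ ∧
      Tendsto (fun k => ‖x (φ k)‖⁻¹ • x (φ k)) atTop (𝓝 v) := by
  have hu : ∀ k, ‖x k‖⁻¹ • x k ∈ sphere (0 : E) 1 := fun k => by
    rw [mem_sphere_zero_iff_norm, norm_smul, norm_inv, norm_norm,
      inv_mul_cancel₀ (norm_ne_zero_iff.2 (hx0 k))]
  obtain ⟨v, hv, φ, hφ, hconv⟩ := (isCompact_sphere (0 : E) 1).tendsto_subseq hu
  exact ⟨v, ⟨x ∘ φ, fun k => ‖x (φ k)‖⁻¹, fun k => hxX _, fun k => by simpa using hx0 _,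
    hx.comp hφ.tendsto_atTop, hconv⟩, mem_sphere_zero_iff_norm.1 hv, φ, hφ, hconv⟩

theorem exists_growth_bound_of_asympCone_ker [ProperSpace E] {X : Set E} {T : E →L[ℝ] F}
    (hT : ∀ v ∈ asympCone X, T v = 0 → v = 0) :
    ∃ c > 0, ∃ R : ℝ, ∀ x ∈ X, R ≤ ‖x‖ → c * ‖x‖ ≤ ‖T x‖ := by
  by_contra! h
  choose x hxX hxR hxT using fun k : ℕ => h (1 / ((k : ℝ) + 1)) (by positivity) k
  have hx0 : ∀ k, 0 < ‖x k‖ := fun k =>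
    pos_of_mul_pos_right ((norm_nonneg _).trans_lt (hxT k)) (by positivity)
  obtain ⟨v, hv, hv1, φ, hφ, hconv⟩ := exists_mem_asympCone_of_tendsto_norm hxX
    (fun k => norm_pos_iff.1 (hx0 k)) (tendsto_atTop_mono hxR tendsto_natCast_atTop_atTop)
  have hsmall : ∀ k, ‖T (‖x (φ k)‖⁻¹ • x (φ k))‖ ≤ 1 / ((φ k : ℝ) + 1) := fun k => by
    rw [map_smul, norm_smul, norm_inv, norm_norm, inv_mul_le_iff₀ (hx0 _), mul_comm]
    exact (hxT _).le
  have hTv : T v = 0 := tendsto_nhds_unique ((T.continuous.tendsto v).comp hconv)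
    (squeeze_zero_norm hsmall (tendsto_one_div_add_atTop_nhds_zero_nat.comp hφ.tendsto_atTop))
  simp [hT v hv hTv] at hv1

theorem growth_bound_of_dist_le {T S : E →L[ℝ] F} {c δ : ℝ} {x : E} (hT : c * ‖x‖ ≤ ‖T x‖)
    (hS : dist S T ≤ δ) : (c - δ) * ‖x‖ ≤ ‖S x‖ := by
  have : ‖T x - S x‖ ≤ δ * ‖x‖ := calc
    ‖T x - S x‖ = ‖(S - T) x‖ := by rw [sub_apply, norm_sub_rev]
    _ ≤ ‖S - T‖ * ‖x‖ := (S - T).le_opNorm x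
    _ ≤ δ * ‖x‖ := by rw [← dist_eq_norm]; gcongr
  linarith [norm_sub_norm_le (T x) (S x)]

theorem eq_zero_of_mem_asympCone_of_growth_bound {X : Set E} {S : E →L[ℝ] F} {c R : ℝ}
    (hc : 0 < c) (hS : ∀ x ∈ X, R ≤ ‖x‖ → c * ‖x‖ ≤ ‖S x‖) {v : E} (hv : v ∈ asympCone X)
    (hSv : S v = 0) : v = 0 := by
  obtain ⟨x, t, hxX, ht, hx, hlim⟩ := hv
  have hle : ∀ᶠ k in atTop, c * ‖t k • x k‖ ≤ ‖S (t k • x k)‖ := by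
    filter_upwards [hx.eventually_ge_atTop R] with k hk
    rw [map_smul, norm_smul, norm_smul, mul_left_comm]
    exact mul_le_mul_of_nonneg_left (hS _ (hxX k) hk) (norm_nonneg _)
  have := le_of_tendsto_of_tendsto (hlim.norm.const_mul c)
    ((S.continuous.tendsto v).comp hlim).norm hle
  rw [hSv, norm_zero] at this
  exact norm_le_zero_iff.1 (nonpos_of_mul_nonpos_right this hc)

theorem image_inter_ball_subset {X : Set E} {S : E →L[ℝ] F} {c R : ℝ} (hc : 0 < c)
    (hS : ∀ x ∈ X, R ≤ ‖x‖ → c * ‖x‖ ≤ ‖S x‖) (B : ℝ) :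
    ball 0 B ∩ S '' X ⊆ S '' (X ∩ closedBall 0 (max R (B / c))) := by
  rintro _ ⟨hB, x, hx, rfl⟩
  refine ⟨x, ⟨hx, mem_closedBall_zero_iff.2 ?_⟩, rfl⟩
  rcases le_or_gt R ‖x‖ with hR | hR
  · refine le_max_of_le_right ((le_div_iff₀' hc).2 ((hS x hx hR).trans ?_))
    exact (mem_ball_zero_iff.1 hB).le
  · exact le_max_of_le_left hR.le

theorem isClosed_image_of_growth_bound [ProperSpace E] {X : Set E} (hX : IsClosed X)
    {S : E →L[ℝ] F} {c R : ℝ} (hc : 0 < c) (hS : ∀ x ∈ X, R ≤ ‖x‖ → c * ‖x‖ ≤ ‖S x‖) :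
    IsClosed (S '' X) := by
  refine isClosed_of_closure_subset fun p hp => ?_
  have hK : IsCompact (S '' (X ∩ closedBall 0 (max R ((‖p‖ + 1) / c)))) :=
    ((isCompact_closedBall _ _).inter_left hX).image S.continuous
  have hpK := closure_minimal (image_inter_ball_subset hc hS (‖p‖ + 1)) hK.isClosed
    (isOpen_ball.inter_closure ⟨mem_ball_zero_iff.2 (lt_add_one _), hp⟩)
  exact image_mono inter_subset_left hpK

end GrowthBound

/-- If X is closed and C_∞X ∩ ker T = {0}, then there is an open neighborhood N of T in
L(ℝⁿ,ℝᵐ) such that every S ∈ N satisfies C_∞X ∩ ker S = {0} and S(X) is closed. -/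
theorem closedImage_stable {n m : ℕ} (X : Set (EuclideanSpace ℝ (Fin n))) (hX : IsClosed X)
    (T : EuclideanSpace ℝ (Fin n) →L[ℝ] EuclideanSpace ℝ (Fin m))
    (hT : asympCone X ∩ (LinearMap.ker (T : EuclideanSpace ℝ (Fin n) →ₗ[ℝ] EuclideanSpace ℝ (Fin m)) : Set (EuclideanSpace ℝ (Fin n))) = {0}) :
    ∃ N : Set (EuclideanSpace ℝ (Fin n) →L[ℝ] EuclideanSpace ℝ (Fin m)),
      IsOpen N ∧ T ∈ N ∧ ∀ S ∈ N,
        asympCone X ∩ (LinearMap.ker (S : EuclideanSpace ℝ (Fin n) →ₗ[ℝ] EuclideanSpace ℝ (Fin m)) : Set (EuclideanSpace ℝ (Fin n))) = {0} ∧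
        IsClosed (S '' X) := by
  obtain ⟨h0, hTker⟩ := (inter_ker_eq_zero_iff _ T).1 hT
  obtain ⟨c, hc, R, hTX⟩ := exists_growth_bound_of_asympCone_ker hTker
  refine ⟨ball T (c / 2), isOpen_ball, mem_ball_self (by positivity), fun S hS => ?_⟩
  have hSX : ∀ x ∈ X, R ≤ ‖x‖ → c / 2 * ‖x‖ ≤ ‖S x‖ := fun x hx hR => by
    have := growth_bound_of_dist_le (hTX x hx hR) (mem_ball.1 hS).le
    linarith
  refine ⟨(inter_ker_eq_zero_iff _ S).2 ⟨h0, fun v hv hSv => ?_⟩,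
    isClosed_image_of_growth_bound hX (by positivity) hSX⟩
  exact eq_zero_of_mem_asympCone_of_growth_bound (by positivity) hSX hv hSv
end

section
/- Let X ⊆ ℝⁿ be a closed set and T : ℝⁿ → ℝᵐ a linear map with C_∞X ∩ ker(T) = {0}. Then T(X) is closed in ℝᵐ. -/
open Metric Filter Set

/-!
Since a bounded part of the closed set `X` is compact, it suffices that the points of `X` mapped
into a bounded set are bounded. If not, take such points with norms tending to infinity: their
normalised directions accumulate at a unit vector `v` of the asymptotic cone, and `T v = 0`
because `T x / ‖x‖ → 0` while `T x` stays bounded. This contradicts `C_∞X ∩ ker T = {0}`.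
-/

section AsymptoticCone

variable {E : Type*} [NormedAddCommGroup E] [NormedSpace ℝ E]

theorem mem_asympCone_of_tendsto_inv_norm_smul {X : Set E} {x : ℕ → E} {v : E}
    (hxX : ∀ k, x k ∈ X) (hx : Tendsto (fun k => ‖x k‖) atTop atTop)
    (hv : Tendsto (fun k => ‖x k‖⁻¹ • x k) atTop (nhds v)) : v ∈ asympCone X := by
  obtain ⟨N, hN⟩ := eventually_atTop.1 (hx.eventually_gt_atTop 0)
  exact ⟨fun k => x (k + N), fun k => ‖x (k + N)‖⁻¹, fun k => hxX _,
    fun k => inv_pos.2 (hN _ (Nat.le_add_left N k)),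
    (tendsto_add_atTop_iff_nat N).2 hx, (tendsto_add_atTop_iff_nat N).2 hv⟩

theorem exists_tendsto_inv_norm_smul_subseq [ProperSpace E] {x : ℕ → E}
    (hx : Tendsto (fun k => ‖x k‖) atTop atTop) :
    ∃ v : E, ‖v‖ = 1 ∧ ∃ φ : ℕ → ℕ, StrictMono φ ∧
      Tendsto (fun k => ‖x (φ k)‖⁻¹ • x (φ k)) atTop (nhds v) := by
  have hball : ∀ k, ‖x k‖⁻¹ • x k ∈ closedBall (0 : E) 1 := fun k => by
    simpa [norm_smul] using inv_mul_le_one_of_le₀ le_rfl (norm_nonneg (x k))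
  obtain ⟨v, -, φ, hφ, hv⟩ := tendsto_subseq_of_bounded isBounded_closedBall hball
  refine ⟨v, tendsto_nhds_unique hv.norm (tendsto_const_nhds.congr' ?_), φ, hφ, hv⟩
  filter_upwards [(hx.comp hφ.tendsto_atTop).eventually_gt_atTop 0] with k hk
  exact (norm_smul_inv_norm (norm_pos_iff.1 hk)).symm

theorem isBounded_inter_preimage_of_asympCone_inter_ker [ProperSpace E]
    {F : Type*} [NormedAddCommGroup F] [NormedSpace ℝ F] {X : Set E} (T : E →L[ℝ] F)
    (hT : asympCone X ∩ (LinearMap.ker (T : E →ₗ[ℝ] F) : Set E) ⊆ {0})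
    {B : Set F} (hB : Bornology.IsBounded B) : Bornology.IsBounded (X ∩ T ⁻¹' B) := by
  by_contra hunbounded
  simp only [isBounded_iff_forall_norm_le, not_exists, not_forall, not_le] at hunbounded
  choose x hxS hxnorm using fun k : ℕ => hunbounded k
  have hx : Tendsto (fun k => ‖x k‖) atTop atTop :=
    tendsto_atTop_mono (fun k => (hxnorm k).le) tendsto_natCast_atTop_atTop
  obtain ⟨v, hv1, φ, hφ, hv⟩ := exists_tendsto_inv_norm_smul_subseq hx
  have hxφ : Tendsto (fun k => ‖x (φ k)‖) atTop atTop := hx.comp hφ.tendsto_atTop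
  have hvX : v ∈ asympCone X :=
    mem_asympCone_of_tendsto_inv_norm_smul (fun k => (hxS (φ k)).1) hxφ hv
  obtain ⟨C, hC⟩ := isBounded_iff_forall_norm_le.1 hB
  have hTx : Tendsto (fun k => T (‖x (φ k)‖⁻¹ • x (φ k))) atTop (nhds 0) := by
    simpa only [map_smul, Pi.inv_apply] using hxφ.inv_tendsto_atTop.zero_smul_isBoundedUnder_le
      (isBoundedUnder_of ⟨C, fun k => hC _ (hxS (φ k)).2⟩)
  have hTv : T v = 0 := tendsto_nhds_unique ((T.continuous.tendsto v).comp hv) hTx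
  have hv0 : v = 0 := hT ⟨hvX, hTv⟩
  simp [hv0] at hv1

end AsymptoticCone

theorem IsClosed.image_of_isBounded_inter_preimage {E F : Type*} [PseudoMetricSpace E]
    [ProperSpace E] [MetricSpace F] {X : Set E} (hX : IsClosed X) {f : E → F}
    (hf : Continuous f)
    (h : ∀ B : Set F, Bornology.IsBounded B → Bornology.IsBounded (X ∩ f ⁻¹' B)) :
    IsClosed (f '' X) := by
  refine isClosed_of_closure_subset fun p hp => ?_
  have hcompact : IsCompact (X ∩ f ⁻¹' closedBall p 1) :=
    isCompact_of_isClosed_isBounded (hX.inter (isClosed_closedBall.preimage hf))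
      (h _ isBounded_closedBall)
  have hclosed : IsClosed (f '' X ∩ closedBall p 1) := by
    rw [← image_inter_preimage]
    exact (hcompact.image hf).isClosed
  have hp' : p ∈ closure (ball p 1 ∩ f '' X) :=
    isOpen_ball.inter_closure ⟨mem_ball_self one_pos, hp⟩
  have hsub : ball p 1 ∩ f '' X ⊆ f '' X ∩ closedBall p 1 := fun _ hy =>
    ⟨hy.2, ball_subset_closedBall hy.1⟩
  exact (hclosed.closure_subset_iff.2 hsub hp').1

/-- If X is closed and C_∞X ∩ ker T = {0}, then T(X) is closed. -/
theorem closedImage_of_asympCone_ker {n m : ℕ} (X : Set (EuclideanSpace ℝ (Fin n)))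
    (hX : IsClosed X)
    (T : EuclideanSpace ℝ (Fin n) →L[ℝ] EuclideanSpace ℝ (Fin m))
    (hT : asympCone X ∩ (LinearMap.ker (T : EuclideanSpace ℝ (Fin n) →ₗ[ℝ] EuclideanSpace ℝ (Fin m)) : Set (EuclideanSpace ℝ (Fin n))) = {0}) :
    IsClosed (T '' X) := by
  exact hX.image_of_isBounded_inter_preimage T.continuous fun _ hB =>
    isBounded_inter_preimage_of_asympCone_inter_ker T hT.subset hB
end

section
/- Let X ⊆ ℝⁿ be a closed convex set, Y := aff(C_∞X), and suppose T : ℝⁿ → ℝᵐ is a linear map such that the restriction T|_Y has rank m and ri(C_∞X) ∩ ker(T) ≠ ∅. Then T(C_∞X') = ℝᵐ where X' is any translate of X containing 0 in its relative interior; in particular T(X) = ℝᵐ is closed. -/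
open Metric Filter Set

/-!
Take `v ∈ ri(C_∞X)` with `T v = 0`. Given `w`, pick `u ∈ Y` with `T u = w`; as `Y` is the direction
of `aff(C_∞X)` and `v` is relatively interior, `v + ε u ∈ C_∞X` for some `ε > 0`, and since
`C_∞X` is a cone, `ε⁻¹ (v + ε u) ∈ C_∞X` is a preimage of `w`. For closed convex `X`, every
`x ∈ X` satisfies `x + C_∞X ⊆ X`, so `T(X) = ℝᵐ` as well; translating `X` leaves `C_∞X` unchanged.
-/

variable {E : Type*} [SeminormedAddCommGroup E] [NormedSpace ℝ E]

lemma tendsto_zero_of_tendsto_smul_of_tendsto_norm {ι : Type*} {l : Filter ι} {x : ι → E}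
    {t : ι → ℝ} {v : E} (ht : ∀ k, 0 < t k) (hx : Tendsto (fun k => ‖x k‖) l atTop)
    (hv : Tendsto (fun k => t k • x k) l (nhds v)) : Tendsto t l (nhds 0) := by
  refine (hv.norm.div_atTop hx).congr' ?_
  filter_upwards [hx.eventually_ge_atTop 1] with k hk
  rw [norm_smul, Real.norm_eq_abs, abs_of_pos (ht k), mul_div_assoc, div_self (by linarith),
    mul_one]

lemma smul_mem_asympCone {X : Set E} {v : E} {c : ℝ} (hc : 0 < c) (hv : v ∈ asympCone X) :
    c • v ∈ asympCone X := by
  obtain ⟨x, t, hx, ht, hn, hl⟩ := hv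
  refine ⟨x, fun k => c * t k, hx, fun k => mul_pos hc (ht k), hn, ?_⟩
  simpa only [smul_smul] using hl.const_smul c

lemma asympCone_subset_image_add_const (X : Set E) (c : E) :
    asympCone X ⊆ asympCone ((fun y => y + c) '' X) := by
  rintro v ⟨x, t, hx, ht, hn, hl⟩
  refine ⟨fun k => x k + c, t, fun k => mem_image_of_mem _ (hx k), ht, ?_, ?_⟩
  · refine tendsto_atTop_mono (fun k => ?_) (tendsto_atTop_add_const_right _ (-‖c‖) hn)
    simpa [sub_eq_add_neg] using norm_sub_norm_le (x k) (-c)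
  · have hc : Tendsto (fun k => t k • c) atTop (nhds ((0 : ℝ) • c)) :=
      (tendsto_zero_of_tendsto_smul_of_tendsto_norm ht hn hl).smul_const c
    simpa only [smul_add, zero_smul, add_zero] using hl.add hc

lemma asympCone_image_sub_const (X : Set E) (c : E) :
    asympCone ((fun y => y - c) '' X) = asympCone X := by
  refine Subset.antisymm ?_ ?_
  · simpa only [image_image, sub_add_cancel, image_id'] using
      asympCone_subset_image_add_const ((fun y => y - c) '' X) c
  · simpa only [sub_eq_add_neg] using asympCone_subset_image_add_const X (-c)

/- Only an inclusion: `0 ∈ asymptoticCone ℝ X` as soon as `X` is nonempty, while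
`0 ∈ asympCone X` requires `X` to be unbounded. -/
lemma asympCone_subset_asymptoticCone (X : Set E) : asympCone X ⊆ asymptoticCone ℝ X := by
  rintro v ⟨x, t, hx, ht, hn, hl⟩
  have hinv : Tendsto (fun k => (t k)⁻¹) atTop atTop :=
    tendsto_inv_nhdsGT_zero.comp <| tendsto_nhdsWithin_iff.mpr
      ⟨tendsto_zero_of_tendsto_smul_of_tendsto_norm ht hn hl, Eventually.of_forall ht⟩
  have hxv : Tendsto x atTop (AffineSpace.asymptoticNhds ℝ E v) := by
    refine (hinv.atTop_smul_nhds_tendsto_asymptoticNhds hl).congr fun k => ?_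
    rw [smul_smul, inv_mul_cancel₀ (ht k).ne', one_smul]
  exact hxv.frequently (Frequently.of_forall hx)

lemma add_mem_of_mem_asympCone {X : Set E} (hX : IsClosed X) (hconv : Convex ℝ X) {x v : E}
    (hx : x ∈ X) (hv : v ∈ asympCone X) : x + v ∈ X := by
  simpa [add_comm] using
    hconv.smul_vadd_mem_of_isClosed_of_mem_asymptoticCone hX zero_le_one
      (asympCone_subset_asymptoticCone X hv) hx

lemma exists_pos_smul_add_mem_of_mem_intrinsicInterior {C : Set E} {v u : E}
    (hv : v ∈ intrinsicInterior ℝ C) (hu : u ∈ (affineSpan ℝ C).direction) :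
    ∃ ε : ℝ, 0 < ε ∧ ε • u + v ∈ C := by
  obtain ⟨v', hv', rfl⟩ := mem_intrinsicInterior.mp hv
  let line : ℝ → affineSpan ℝ C := fun ε =>
    ⟨ε • u + v', AffineSubspace.vadd_mem_of_mem_direction (Submodule.smul_mem _ ε hu) v'.2⟩
  have hline : Continuous line := by fun_prop
  have h0 : line 0 = v' := Subtype.ext (by simp [line])
  have hev : ∀ᶠ ε in nhdsWithin (0 : ℝ) (Ioi 0), line ε ∈ ((↑) ⁻¹' C : Set (affineSpan ℝ C)) :=
    nhdsWithin_le_nhds <| hline.continuousAt.preimage_mem_nhds <|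
      h0 ▸ mem_interior_iff_mem_nhds.mp hv'
  obtain ⟨ε, hεC, hε⟩ := (hev.and self_mem_nhdsWithin).exists
  exact ⟨ε, hε, hεC⟩

variable {F : Type*} [AddCommGroup F] [Module ℝ F]

lemma image_eq_univ_of_intrinsicInterior_inter_ker_nonempty {C : Set E}
    (hC : ∀ c : ℝ, 0 < c → ∀ x ∈ C, c • x ∈ C) (T : E →ₗ[ℝ] F)
    (hT : (affineSpan ℝ C).direction.map T = ⊤)
    (hri : (intrinsicInterior ℝ C ∩ LinearMap.ker T).Nonempty) : T '' C = univ := by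
  obtain ⟨v, hv, hTv⟩ := hri
  refine eq_univ_of_forall fun w => ?_
  obtain ⟨u, hu, rfl⟩ : w ∈ (affineSpan ℝ C).direction.map T := hT ▸ Submodule.mem_top
  obtain ⟨ε, hε, hεC⟩ := exists_pos_smul_add_mem_of_mem_intrinsicInterior hv hu
  refine ⟨ε⁻¹ • (ε • u + v), hC _ (inv_pos.mpr hε) _ hεC, ?_⟩
  rw [map_smul, map_add, map_smul, LinearMap.mem_ker.mp hTv, add_zero, smul_smul,
    inv_mul_cancel₀ hε.ne', one_smul]

lemma image_eq_univ_of_image_asympCone_eq_univ {X : Set E} (hX : IsClosed X)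
    (hconv : Convex ℝ X) (hne : X.Nonempty) (T : E →ₗ[ℝ] F) (hT : T '' asympCone X = univ) :
    T '' X = univ := by
  obtain ⟨x, hx⟩ := hne
  refine eq_univ_of_forall fun w => ?_
  obtain ⟨v, hv, hTv⟩ : w - T x ∈ T '' asympCone X := hT ▸ mem_univ _
  exact ⟨x + v, add_mem_of_mem_asympCone hX hconv hx hv, by rw [map_add, hTv, add_sub_cancel]⟩

/-- If X is closed convex, T|_{aff(C_∞X)} has rank m and ker T meets ri(C_∞X), then for any
translate X' of X with 0 ∈ ri(X') one has T(C_∞X') = ℝᵐ; in particular T(X) = ℝᵐ is closed. -/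
theorem surjOnCone_of_ri_meets_ker {n m : ℕ} (X : Set (EuclideanSpace ℝ (Fin n)))
    (hX : IsClosed X) (hconv : Convex ℝ X)
    (Y : Submodule ℝ (EuclideanSpace ℝ (Fin n)))
    (hY : (Y : Set (EuclideanSpace ℝ (Fin n))) = (affineSpan ℝ (asympCone X) : Set (EuclideanSpace ℝ (Fin n))))
    (T : EuclideanSpace ℝ (Fin n) →L[ℝ] EuclideanSpace ℝ (Fin m))
    (hrank : Module.finrank ℝ (Y.map (T : EuclideanSpace ℝ (Fin n) →ₗ[ℝ] EuclideanSpace ℝ (Fin m))) = m)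
    (hri : (intrinsicInterior ℝ (asympCone X) ∩ (LinearMap.ker (T : EuclideanSpace ℝ (Fin n) →ₗ[ℝ] EuclideanSpace ℝ (Fin m)) : Set (EuclideanSpace ℝ (Fin n)))).Nonempty) :
    (∀ x₀ : EuclideanSpace ℝ (Fin n),
        (0 : EuclideanSpace ℝ (Fin n)) ∈ intrinsicInterior ℝ ((fun y => y - x₀) '' X) →
        T '' asympCone ((fun y => y - x₀) '' X) = Set.univ) ∧
      T '' X = Set.univ ∧ IsClosed (T '' X) := by
  have hdir : (affineSpan ℝ (asympCone X)).direction = Y := by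
    have hYaff : Y.toAffineSubspace = affineSpan ℝ (asympCone X) := SetLike.coe_injective hY
    rw [← hYaff, Submodule.toAffineSubspace_direction]
  have hTY : Y.map (T : EuclideanSpace ℝ (Fin n) →ₗ[ℝ] EuclideanSpace ℝ (Fin m)) = ⊤ :=
    Submodule.eq_top_of_finrank_eq (by rw [hrank, finrank_euclideanSpace_fin])
  have hTC : T '' asympCone X = univ :=
    image_eq_univ_of_intrinsicInterior_inter_ker_nonempty (fun _ hc _ => smul_mem_asympCone hc) _
      (hdir ▸ hTY) hri
  have hne : X.Nonempty := by
    obtain ⟨v, hv, -⟩ := hri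
    obtain ⟨x, -, hx, -⟩ := intrinsicInterior_subset hv
    exact ⟨x 0, hx 0⟩
  have hTX : T '' X = univ := image_eq_univ_of_image_asympCone_eq_univ hX hconv hne _ hTC
  refine ⟨fun x₀ _ => ?_, hTX, hTX ▸ isClosed_univ⟩
  rw [asympCone_image_sub_const]
  exact hTC
end
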